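/- (Invariance of the flow force.) Let γ be real, ε₁ > 0 and α real. Suppose η, ζ, ϑ : ℝ×[0,1] → ℝ are twice continuously differentiable on the closed strip, harmonic in R, satisfy η_x² + η_y² > 0 everywhere on the closed strip, satisfy on Γ: ζ(x,1) = 1 − γ/2 − (γ/2)η(x,1)², (ζ_y + γ η η_y)² + ε₁ ϑ_y² = (1 + ε₁ − 2α(η−1))·(η_x² + η_y²) at every point (x,1), and ϑ(x,1) = 1; and satisfy η = ζ = ϑ = 0 on B. Define for each x ∈ ℝ the flow force S(x) := (1/2)∫₀¹ (η_y(ζ_y² − ζ_x²) + 2η_x ζ_x ζ_y)/(η_x² + η_y²) dy + (ε₁/2)∫₀¹ (η_y(ϑ_y² − ϑ_x²) + 2η_x ϑ_x ϑ_y)/(η_x² + η_y²) dy − [ (γ²/6)·η(x,1)³ + (α/2)·η(x,1)² − ((2α+1+ε₁)/2)·η(x,1) ]. Then S is constant: S(x₁) = S(x₂) for all x₁, x₂ ∈ ℝ. -/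

import Mathlib

/-- The closed strip `ℝ × [0,1]`. -/
def strip : Set (ℝ × ℝ) := {p : ℝ × ℝ | p.2 ∈ Set.Icc (0 : ℝ) 1}

/-- The open strip `R = ℝ × (0,1)`. -/
def stripO : Set (ℝ × ℝ) := {p : ℝ × ℝ | p.2 ∈ Set.Ioo (0 : ℝ) 1}

/-- Partial derivative in the first (horizontal) variable, taken within the closed strip
(at interior points it agrees with the usual partial derivative; on the boundary it is
the one-sided partial derivative). -/
noncomputable def pdx (f : ℝ × ℝ → ℝ) (p : ℝ × ℝ) : ℝ := fderivWithin ℝ f strip p (1, 0)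

/-- Partial derivative in the second (vertical) variable, taken within the closed strip. -/
noncomputable def pdy (f : ℝ × ℝ → ℝ) (p : ℝ × ℝ) : ℝ := fderivWithin ℝ f strip p (0, 1)

/-!
For harmonic `η`, `u` with `∇η ≠ 0`, the function `(u_x - i u_y)² / (η_x - i η_y)` is holomorphic
with real part `-fluxQ η u` and imaginary part `-fluxP η u`, so by Cauchy–Riemann the field
`(fluxP η u, fluxQ η u)` is divergence free. Integrating `∂ₓ fluxP = -∂_y fluxQ` over `[0, 1]` shows
that `x ↦ ∫₀¹ fluxP η u (x, y) dy` has derivative `fluxQ η u (x, 0) - fluxQ η u (x, 1)`. On the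
bottom `fluxQ` vanishes because `η_x = u_x = 0` there; on the top the boundary conditions turn
`½ fluxQ η ζ + (ε₁/2) fluxQ η ϑ` into minus the derivative of the cubic in `η(x, 1)` subtracted in
the flow force. Hence the flow force has derivative zero.
-/

open Set Filter Topology MeasureTheory

theorem hasDerivAt_integral_of_divergence_free {P P' Q : ℝ × ℝ → ℝ} {c d : ℝ} (hcd : c ≤ d)
    (hP : ContinuousOn P {p | p.2 ∈ Icc c d}) (hP' : ContinuousOn P' {p | p.2 ∈ Icc c d})
    (hQ : ContinuousOn Q {p | p.2 ∈ Icc c d})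
    (hPx : ∀ x, ∀ y ∈ Icc c d, HasDerivAt (fun t => P (t, y)) (P' (x, y)) x)
    (hQy : ∀ x, ∀ y ∈ Ioo c d, HasDerivAt (fun s => Q (x, s)) (-P' (x, y)) y) (x₀ : ℝ) :
    HasDerivAt (fun x => ∫ y in c..d, P (x, y)) (Q (x₀, c) - Q (x₀, d)) x₀ := by
  have hrow : ∀ {F : ℝ × ℝ → ℝ}, ContinuousOn F {p | p.2 ∈ Icc c d} →
      ∀ y ∈ Icc c d, Continuous fun x => F (x, y) :=
    fun hF y hy => hF.comp_continuous (by fun_prop) fun _ => hy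
  have hcol : ∀ {F : ℝ × ℝ → ℝ}, ContinuousOn F {p | p.2 ∈ Icc c d} →
      ∀ x, IntervalIntegrable (fun y => F (x, y)) volume c d := fun hF x =>
    ContinuousOn.intervalIntegrable_of_Icc hcd <| hF.comp (by fun_prop) fun _ hy => hy
  have hQ_row : Continuous fun x => Q (x, c) - Q (x, d) :=
    (hrow hQ c (left_mem_Icc.2 hcd)).sub (hrow hQ d (right_mem_Icc.2 hcd))
  have hQ_col : ∀ t, ∫ y in c..d, P' (t, y) = Q (t, c) - Q (t, d) := fun t => by
    have := intervalIntegral.integral_eq_sub_of_hasDerivAt_of_le (f := fun s => Q (t, s)) hcd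
      (hQ.comp (by fun_prop) fun _ hy => hy) (hQy t) (hcol hP' t).neg
    rw [intervalIntegral.integral_neg] at this
    linarith
  have hP'_rect : ∀ x, IntegrableOn (Function.uncurry fun t y => P' (t, y))
      (uIoc 0 x ×ˢ uIoc c d) := fun x =>
    (ContinuousOn.integrableOn_compact (isCompact_uIcc.prod isCompact_Icc)
      (hP'.mono fun p hp => hp.2)).mono_set
      (prod_mono uIoc_subset_uIcc (uIoc_of_le hcd ▸ Ioc_subset_Icc_self))
  have hprimitive : (fun x => ∫ y in c..d, P (x, y))
      = fun x => (∫ y in c..d, P (0, y)) + ∫ t in (0 : ℝ)..x, (Q (t, c) - Q (t, d)) := by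
    funext x
    -- `∫₀ˣ (Q(t, c) - Q(t, d)) dt = ∫₀ˣ ∫_c^d P' = ∫_c^d ∫₀ˣ P' = ∫_c^d (P(x, ·) - P(0, ·))`
    rw [← intervalIntegral.integral_congr (fun t _ => hQ_col t),
      intervalIntegral_intervalIntegral_swap (hP'_rect x),
      intervalIntegral.integral_congr (g := fun y => P (x, y) - P (0, y)) fun y hy =>
        intervalIntegral.integral_eq_sub_of_hasDerivAt
          (fun t _ => hPx t y (uIcc_of_le hcd ▸ hy))
          ((hrow hP' y (uIcc_of_le hcd ▸ hy)).intervalIntegrable 0 x),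
      intervalIntegral.integral_sub (hcol hP x) (hcol hP 0)]
    ring
  rw [hprimitive]
  exact (hQ_row.integral_hasStrictDerivAt 0 x₀).hasDerivAt.const_add _

theorem isOpen_stripO : IsOpen stripO := isOpen_Ioo.preimage continuous_snd

theorem stripO_subset_strip : stripO ⊆ strip := fun _ hp => Ioo_subset_Icc_self hp

theorem strip_mem_nhds {p : ℝ × ℝ} (hp : p ∈ stripO) : strip ∈ 𝓝 p :=
  mem_of_superset (isOpen_stripO.mem_nhds hp) stripO_subset_strip

theorem uniqueDiffOn_strip : UniqueDiffOn ℝ strip :=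
  uniqueDiffOn_convex ((convex_Icc (0 : ℝ) 1).linear_preimage (LinearMap.snd ℝ ℝ ℝ))
    ⟨(0, 1 / 2), mem_interior_iff_mem_nhds.2 (strip_mem_nhds (by norm_num [stripO]))⟩

section Partials

variable {u : ℝ × ℝ → ℝ}

theorem hasDerivAt_slice_pdx (hu : DifferentiableOn ℝ u strip) {y : ℝ} (hy : y ∈ Icc (0 : ℝ) 1)
    (x : ℝ) : HasDerivAt (fun t => u (t, y)) (pdx u (x, y)) x :=
  hasDerivWithinAt_univ.1 <| (hu (x, y) hy).hasFDerivWithinAt.comp_hasDerivWithinAt x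
    ((hasDerivAt_id x).prodMk (hasDerivAt_const x y)).hasDerivWithinAt fun _ _ => hy

theorem hasDerivAt_slice_pdy (hu : DifferentiableOn ℝ u strip) {x y : ℝ} (hp : (x, y) ∈ stripO) :
    HasDerivAt (fun s => u (x, s)) (pdy u (x, y)) y :=
  ((hu (x, y) (stripO_subset_strip hp)).hasFDerivWithinAt.hasFDerivAt
    (strip_mem_nhds hp)).comp_hasDerivAt y ((hasDerivAt_const y x).prodMk (hasDerivAt_id y))

theorem pdx_eq_zero_of_slice_const (hu : DifferentiableOn ℝ u strip) {c y : ℝ}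
    (hy : y ∈ Icc (0 : ℝ) 1) (hc : ∀ t, u (t, y) = c) (x : ℝ) : pdx u (x, y) = 0 := by
  have h := hasDerivAt_slice_pdx hu hy x
  rw [show (fun t => u (t, y)) = fun _ => c from funext hc] at h
  exact h.unique (hasDerivAt_const x c)

theorem contDiffOn_pdx {m n : WithTop ℕ∞} (hu : ContDiffOn ℝ n u strip) (hmn : m + 1 ≤ n) :
    ContDiffOn ℝ m (pdx u) strip :=
  (hu.fderivWithin uniqueDiffOn_strip hmn).clm_apply contDiffOn_const

theorem contDiffOn_pdy {m n : WithTop ℕ∞} (hu : ContDiffOn ℝ n u strip) (hmn : m + 1 ≤ n) :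
    ContDiffOn ℝ m (pdy u) strip :=
  (hu.fderivWithin uniqueDiffOn_strip hmn).clm_apply contDiffOn_const

theorem differentiableOn_pdx (hu : ContDiffOn ℝ 2 u strip) : DifferentiableOn ℝ (pdx u) strip :=
  (contDiffOn_pdx hu (m := 1) le_rfl).differentiableOn one_ne_zero

theorem differentiableOn_pdy (hu : ContDiffOn ℝ 2 u strip) : DifferentiableOn ℝ (pdy u) strip :=
  (contDiffOn_pdy hu (m := 1) le_rfl).differentiableOn one_ne_zero

theorem pdy_pdx_eq_pdx_pdy (hu : ContDiffOn ℝ 2 u strip) {p : ℝ × ℝ} (hp : p ∈ stripO) :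
    pdy (pdx u) p = pdx (pdy u) p := by
  have hpS := stripO_subset_strip hp
  have hD : DifferentiableWithinAt ℝ (fderivWithin ℝ u strip) strip p :=
    ((hu.fderivWithin uniqueDiffOn_strip (m := 1) le_rfl).differentiableOn one_ne_zero) p hpS
  have happly : ∀ v w, fderivWithin ℝ (fun q => fderivWithin ℝ u strip q v) strip p w
      = fderivWithin ℝ (fderivWithin ℝ u strip) strip p w v := fun v w => by
    rw [(hD.hasFDerivWithinAt.clm_apply (hasFDerivWithinAt_const v p strip)).fderivWithin
      (uniqueDiffOn_strip p hpS)]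
    simp
  change fderivWithin ℝ (fun q => fderivWithin ℝ u strip q (1, 0)) strip p (0, 1)
    = fderivWithin ℝ (fun q => fderivWithin ℝ u strip q (0, 1)) strip p (1, 0)
  rw [happly, happly]
  exact (hu p hpS).isSymmSndFDerivWithinAt (by simp [minSmoothness_of_isRCLikeNormedField])
    uniqueDiffOn_strip (subset_closure (mem_interior_iff_mem_nhds.2 (strip_mem_nhds hp))) hpS _ _

end Partials

noncomputable def fluxP (η u : ℝ × ℝ → ℝ) (p : ℝ × ℝ) : ℝ :=
  (pdy η p * (pdy u p ^ 2 - pdx u p ^ 2) + 2 * pdx η p * pdx u p * pdy u p)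
    / (pdx η p ^ 2 + pdy η p ^ 2)

noncomputable def fluxQ (η u : ℝ × ℝ → ℝ) (p : ℝ × ℝ) : ℝ :=
  (pdx η p * (pdy u p ^ 2 - pdx u p ^ 2) - 2 * pdy η p * pdx u p * pdy u p)
    / (pdx η p ^ 2 + pdy η p ^ 2)

section Flux

variable {η u : ℝ × ℝ → ℝ} {n : WithTop ℕ∞}

theorem contDiffOn_fluxP (hη : ContDiffOn ℝ (n + 1) η strip) (hu : ContDiffOn ℝ (n + 1) u strip)
    (hgrad : ∀ p ∈ strip, 0 < pdx η p ^ 2 + pdy η p ^ 2) : ContDiffOn ℝ n (fluxP η u) strip := by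
  have ha := contDiffOn_pdx hη le_rfl
  have hb := contDiffOn_pdy hη le_rfl
  have hc := contDiffOn_pdx hu le_rfl
  have hd := contDiffOn_pdy hu le_rfl
  exact ((hb.mul ((hd.pow 2).sub (hc.pow 2))).add (((contDiffOn_const.mul ha).mul hc).mul hd)).div
    ((ha.pow 2).add (hb.pow 2)) fun p hp => (hgrad p hp).ne'

theorem contDiffOn_fluxQ (hη : ContDiffOn ℝ (n + 1) η strip) (hu : ContDiffOn ℝ (n + 1) u strip)
    (hgrad : ∀ p ∈ strip, 0 < pdx η p ^ 2 + pdy η p ^ 2) : ContDiffOn ℝ n (fluxQ η u) strip := by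
  have ha := contDiffOn_pdx hη le_rfl
  have hb := contDiffOn_pdy hη le_rfl
  have hc := contDiffOn_pdx hu le_rfl
  have hd := contDiffOn_pdy hu le_rfl
  exact ((ha.mul ((hd.pow 2).sub (hc.pow 2))).sub (((contDiffOn_const.mul hb).mul hc).mul hd)).div
    ((ha.pow 2).add (hb.pow 2)) fun p hp => (hgrad p hp).ne'

theorem hasDerivAt_slice_fluxQ (hη : ContDiffOn ℝ 2 η strip) (hu : ContDiffOn ℝ 2 u strip)
    (hηH : ∀ p ∈ stripO, pdx (pdx η) p + pdy (pdy η) p = 0)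
    (huH : ∀ p ∈ stripO, pdx (pdx u) p + pdy (pdy u) p = 0)
    (hgrad : ∀ p ∈ strip, 0 < pdx η p ^ 2 + pdy η p ^ 2) {x y : ℝ} (hp : (x, y) ∈ stripO) :
    HasDerivAt (fun s => fluxQ η u (x, s)) (-pdx (fluxP η u) (x, y)) y := by
  have hpS : y ∈ Icc (0 : ℝ) 1 := stripO_subset_strip hp
  have hax := hasDerivAt_slice_pdx (differentiableOn_pdx hη) hpS x
  have hbx := hasDerivAt_slice_pdx (differentiableOn_pdy hη) hpS x
  have hcx := hasDerivAt_slice_pdx (differentiableOn_pdx hu) hpS x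
  have hdx := hasDerivAt_slice_pdx (differentiableOn_pdy hu) hpS x
  have hay := hasDerivAt_slice_pdy (differentiableOn_pdx hη) hp
  have hby := hasDerivAt_slice_pdy (differentiableOn_pdy hη) hp
  have hcy := hasDerivAt_slice_pdy (differentiableOn_pdx hu) hp
  have hdy := hasDerivAt_slice_pdy (differentiableOn_pdy hu) hp
  rw [pdy_pdx_eq_pdx_pdy hη hp] at hay
  rw [pdy_pdx_eq_pdx_pdy hu hp] at hcy
  rw [eq_neg_of_add_eq_zero_right (hηH _ hp)] at hby
  rw [eq_neg_of_add_eq_zero_right (huH _ hp)] at hdy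
  have hden : pdx η (x, y) ^ 2 + pdy η (x, y) ^ 2 ≠ 0 := (hgrad _ hpS).ne'
  have hQ := ((hay.mul ((hdy.pow 2).sub (hcy.pow 2))).sub
    ((((hasDerivAt_const y (2 : ℝ)).mul hby).mul hcy).mul hdy)).div ((hay.pow 2).add (hby.pow 2)) hden
  have hP := ((hbx.mul ((hdx.pow 2).sub (hcx.pow 2))).add
    ((((hasDerivAt_const x (2 : ℝ)).mul hax).mul hcx).mul hdx)).div ((hax.pow 2).add (hbx.pow 2)) hden
  rw [(hasDerivAt_slice_pdx ((contDiffOn_fluxP hη hu hgrad).differentiableOn one_ne_zero) hpS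
    x).unique hP]
  refine hQ.congr_deriv ?_
  simp only [Pi.add_apply, Pi.mul_apply, Pi.sub_apply, Pi.pow_apply]
  field_simp
  ring

theorem hasDerivAt_integral_fluxP (hη : ContDiffOn ℝ 2 η strip) (hu : ContDiffOn ℝ 2 u strip)
    (hηH : ∀ p ∈ stripO, pdx (pdx η) p + pdy (pdy η) p = 0)
    (huH : ∀ p ∈ stripO, pdx (pdx u) p + pdy (pdy u) p = 0)
    (hgrad : ∀ p ∈ strip, 0 < pdx η p ^ 2 + pdy η p ^ 2) (x : ℝ) :
    HasDerivAt (fun x => ∫ y in (0 : ℝ)..1, fluxP η u (x, y))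
      (fluxQ η u (x, 0) - fluxQ η u (x, 1)) x :=
  have hP := contDiffOn_fluxP hη hu hgrad (n := 1)
  hasDerivAt_integral_of_divergence_free zero_le_one hP.continuousOn
    (contDiffOn_pdx hP (m := 0) (by simp)).continuousOn
    (contDiffOn_fluxQ (n := 1) hη hu hgrad).continuousOn
    (fun x _ hy => hasDerivAt_slice_pdx (hP.differentiableOn one_ne_zero) hy x)
    (fun _ _ hy => hasDerivAt_slice_fluxQ hη hu hηH huH hgrad hy) x

theorem fluxQ_bottom (hη : DifferentiableOn ℝ η strip) (hu : DifferentiableOn ℝ u strip)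
    (hη0 : ∀ t, η (t, 0) = 0) (hu0 : ∀ t, u (t, 0) = 0) (x : ℝ) : fluxQ η u (x, 0) = 0 := by
  have h0 : (0 : ℝ) ∈ Icc (0 : ℝ) 1 := left_mem_Icc.2 zero_le_one
  simp [fluxQ, pdx_eq_zero_of_slice_const hη h0 hη0, pdx_eq_zero_of_slice_const hu h0 hu0]

end Flux

theorem flowForce_fluxQ_top {γ ε₁ α : ℝ} {η ζ ϑ : ℝ × ℝ → ℝ} (hη : DifferentiableOn ℝ η strip)
    (hζ : DifferentiableOn ℝ ζ strip) (hϑ : DifferentiableOn ℝ ϑ strip)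
    (hΓ1 : ∀ t, ζ (t, 1) = 1 - γ / 2 - γ / 2 * η (t, 1) ^ 2) (hΓ3 : ∀ t, ϑ (t, 1) = 1) {x : ℝ}
    (hgrad : 0 < pdx η (x, 1) ^ 2 + pdy η (x, 1) ^ 2)
    (hΓ2 : (pdy ζ (x, 1) + γ * η (x, 1) * pdy η (x, 1)) ^ 2 + ε₁ * pdy ϑ (x, 1) ^ 2
      = (1 + ε₁ - 2 * α * (η (x, 1) - 1)) * (pdx η (x, 1) ^ 2 + pdy η (x, 1) ^ 2)) :
    1 / 2 * fluxQ η ζ (x, 1) + ε₁ / 2 * fluxQ η ϑ (x, 1)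
      = -((γ ^ 2 / 2 * η (x, 1) ^ 2 + α * η (x, 1) - (2 * α + 1 + ε₁) / 2) * pdx η (x, 1)) := by
  have h1 : (1 : ℝ) ∈ Icc (0 : ℝ) 1 := right_mem_Icc.2 zero_le_one
  have hζx : pdx ζ (x, 1) = -(γ * η (x, 1) * pdx η (x, 1)) := by
    have h := hasDerivAt_slice_pdx hζ h1 x
    rw [show (fun t => ζ (t, 1)) = fun t => 1 - γ / 2 - γ / 2 * η (t, 1) ^ 2 from funext hΓ1] at h
    rw [h.unique (((hasDerivAt_slice_pdx hη h1 x).pow 2).const_mul (γ / 2) |>.const_sub _)]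
    push_cast
    ring
  simp only [fluxQ, hζx, pdx_eq_zero_of_slice_const hϑ h1 hΓ3 x]
  field_simp
  linear_combination pdx η (x, 1) * hΓ2

theorem stmt_13_general (γ ε₁ α : ℝ)
    (η ζ ϑ : ℝ × ℝ → ℝ)
    (hηC : ContDiffOn ℝ 2 η strip) (hζC : ContDiffOn ℝ 2 ζ strip)
    (hϑC : ContDiffOn ℝ 2 ϑ strip)
    (hηH : ∀ p ∈ stripO, pdx (pdx η) p + pdy (pdy η) p = 0)
    (hζH : ∀ p ∈ stripO, pdx (pdx ζ) p + pdy (pdy ζ) p = 0)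
    (hϑH : ∀ p ∈ stripO, pdx (pdx ϑ) p + pdy (pdy ϑ) p = 0)
    (hgrad : ∀ p ∈ strip, 0 < (pdx η p) ^ 2 + (pdy η p) ^ 2)
    (hΓ1 : ∀ x : ℝ, ζ (x, 1) = 1 - γ / 2 - (γ / 2) * (η (x, 1)) ^ 2)
    (hΓ2 : ∀ x : ℝ,
      (pdy ζ (x, 1) + γ * η (x, 1) * pdy η (x, 1)) ^ 2 + ε₁ * (pdy ϑ (x, 1)) ^ 2
        = (1 + ε₁ - 2 * α * (η (x, 1) - 1))
            * ((pdx η (x, 1)) ^ 2 + (pdy η (x, 1)) ^ 2))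
    (hΓ3 : ∀ x : ℝ, ϑ (x, 1) = 1)
    (hB : ∀ x : ℝ, η (x, 0) = 0 ∧ ζ (x, 0) = 0 ∧ ϑ (x, 0) = 0) :
    let S : ℝ → ℝ := fun x =>
      (1 / 2) * (∫ y in (0 : ℝ)..1,
        (pdy η (x, y) * ((pdy ζ (x, y)) ^ 2 - (pdx ζ (x, y)) ^ 2)
            + 2 * pdx η (x, y) * pdx ζ (x, y) * pdy ζ (x, y))
          / ((pdx η (x, y)) ^ 2 + (pdy η (x, y)) ^ 2))
      + (ε₁ / 2) * (∫ y in (0 : ℝ)..1,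
        (pdy η (x, y) * ((pdy ϑ (x, y)) ^ 2 - (pdx ϑ (x, y)) ^ 2)
            + 2 * pdx η (x, y) * pdx ϑ (x, y) * pdy ϑ (x, y))
          / ((pdx η (x, y)) ^ 2 + (pdy η (x, y)) ^ 2))
      - ((γ ^ 2 / 6) * (η (x, 1)) ^ 3 + (α / 2) * (η (x, 1)) ^ 2
          - ((2 * α + 1 + ε₁) / 2) * η (x, 1))
    ∀ x₁ x₂ : ℝ, S x₁ = S x₂ := by
  intro S
  have hD : ∀ {u : ℝ × ℝ → ℝ}, ContDiffOn ℝ 2 u strip → DifferentiableOn ℝ u strip :=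
    fun hu => hu.differentiableOn two_ne_zero
  have hS : ∀ x, HasDerivAt S 0 x := by
    intro x
    have hη1 := hasDerivAt_slice_pdx (hD hηC) (right_mem_Icc.2 zero_le_one) x
    have hcubic := (((hη1.pow 3).const_mul (γ ^ 2 / 6)).add ((hη1.pow 2).const_mul (α / 2))).sub
      (hη1.const_mul ((2 * α + 1 + ε₁) / 2))
    refine (((hasDerivAt_integral_fluxP hηC hζC hηH hζH hgrad x).const_mul (1 / 2)).add
      ((hasDerivAt_integral_fluxP hηC hϑC hηH hϑH hgrad x).const_mul (ε₁ / 2))).sub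
      hcubic |>.congr_deriv ?_
    rw [fluxQ_bottom (hD hηC) (hD hζC) (fun t => (hB t).1) (fun t => (hB t).2.1),
      fluxQ_bottom (hD hηC) (hD hϑC) (fun t => (hB t).1) (fun t => (hB t).2.2)]
    linear_combination -flowForce_fluxQ_top (hD hηC) (hD hζC) (hD hϑC) hΓ1 hΓ3
      (hgrad _ (right_mem_Icc.2 zero_le_one)) (hΓ2 x)
  exact is_const_of_deriv_eq_zero (fun x => (hS x).differentiableAt) fun x => (hS x).deriv

/-- Invariance of the flow force: for a solution `(η, ζ, ϑ)` of the conformally mapped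
electrohydrodynamic system on the strip with nonvanishing `∇η`, the flow force
`S(x) = (1/2)∫₀¹ (η_y(ζ_y² − ζ_x²) + 2η_xζ_xζ_y)/(η_x² + η_y²) dy
      + (ε₁/2)∫₀¹ (η_y(ϑ_y² − ϑ_x²) + 2η_xϑ_xϑ_y)/(η_x² + η_y²) dy
      − ((γ²/6)η(x,1)³ + (α/2)η(x,1)² − ((2α+1+ε₁)/2)η(x,1))`
is independent of `x`. -/
theorem stmt_13 (γ ε₁ α : ℝ) (hε₁ : 0 < ε₁)
    (η ζ ϑ : ℝ × ℝ → ℝ)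
    (hηC : ContDiffOn ℝ 2 η strip) (hζC : ContDiffOn ℝ 2 ζ strip)
    (hϑC : ContDiffOn ℝ 2 ϑ strip)
    (hηH : ∀ p ∈ stripO, pdx (pdx η) p + pdy (pdy η) p = 0)
    (hζH : ∀ p ∈ stripO, pdx (pdx ζ) p + pdy (pdy ζ) p = 0)
    (hϑH : ∀ p ∈ stripO, pdx (pdx ϑ) p + pdy (pdy ϑ) p = 0)
    (hgrad : ∀ p ∈ strip, 0 < (pdx η p) ^ 2 + (pdy η p) ^ 2)
    (hΓ1 : ∀ x : ℝ, ζ (x, 1) = 1 - γ / 2 - (γ / 2) * (η (x, 1)) ^ 2)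
    (hΓ2 : ∀ x : ℝ,
      (pdy ζ (x, 1) + γ * η (x, 1) * pdy η (x, 1)) ^ 2 + ε₁ * (pdy ϑ (x, 1)) ^ 2
        = (1 + ε₁ - 2 * α * (η (x, 1) - 1))
            * ((pdx η (x, 1)) ^ 2 + (pdy η (x, 1)) ^ 2))
    (hΓ3 : ∀ x : ℝ, ϑ (x, 1) = 1)
    (hB : ∀ x : ℝ, η (x, 0) = 0 ∧ ζ (x, 0) = 0 ∧ ϑ (x, 0) = 0) :
    let S : ℝ → ℝ := fun x =>
      (1 / 2) * (∫ y in (0 : ℝ)..1,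
        (pdy η (x, y) * ((pdy ζ (x, y)) ^ 2 - (pdx ζ (x, y)) ^ 2)
            + 2 * pdx η (x, y) * pdx ζ (x, y) * pdy ζ (x, y))
          / ((pdx η (x, y)) ^ 2 + (pdy η (x, y)) ^ 2))
      + (ε₁ / 2) * (∫ y in (0 : ℝ)..1,
        (pdy η (x, y) * ((pdy ϑ (x, y)) ^ 2 - (pdx ϑ (x, y)) ^ 2)
            + 2 * pdx η (x, y) * pdx ϑ (x, y) * pdy ϑ (x, y))
          / ((pdx η (x, y)) ^ 2 + (pdy η (x, y)) ^ 2))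
      - ((γ ^ 2 / 6) * (η (x, 1)) ^ 3 + (α / 2) * (η (x, 1)) ^ 2
          - ((2 * α + 1 + ε₁) / 2) * η (x, 1))
    ∀ x₁ x₂ : ℝ, S x₁ = S x₂ :=
  stmt_13_general γ ε₁ α η ζ ϑ hηC hζC hϑC hηH hζH hϑH hgrad hΓ1 hΓ2 hΓ3 hB
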